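/- Let Λ be the Lobachevsky function. Then 6·(Λ(5π/12) + Λ(π/12)) = 8·Λ(π/4). -/

import Mathlib

/-!
Integrating `log` of `2 sin 3x = 2 sin x · 2 sin(x + π/3) · 2 sin(x + 2π/3)` gives the
triplication formula `Λ(3θ) = 3(Λ(θ) + Λ(θ + π/3) + Λ(θ + 2π/3) − Λ(π/3) − Λ(2π/3))`.
At `θ = π/12` its right side contains `Λ(3π/4) − Λ(π/3) − Λ(2π/3)`, which the reflection
`Λ(π − θ) = Λ(π) − Λ(θ)` turns into `−Λ(π/4)`; so `4 Λ(π/4) = 3(Λ(π/12) + Λ(5π/12))`.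
-/

open Real

/-- The Lobachevsky function `Λ(θ) = −∫₀^θ log|2 sin t| dt`. -/
noncomputable def lobachevsky (θ : ℝ) : ℝ :=
  -∫ t in (0:ℝ)..θ, Real.log |2 * Real.sin t|

open MeasureTheory intervalIntegral

theorem intervalIntegrable_log_abs_two_mul_sin (a b : ℝ) :
    IntervalIntegrable (fun t ↦ log |2 * sin t|) volume a b :=
  (analyticOnNhd_const.mul analyticOnNhd_sin).meromorphicOn.intervalIntegrable_log_norm

@[simp]
theorem lobachevsky_zero : lobachevsky 0 = 0 := by
  simp [lobachevsky]

theorem lobachevsky_sub_lobachevsky (a b : ℝ) :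
    lobachevsky b - lobachevsky a = -∫ t in a..b, log |2 * sin t| := by
  rw [lobachevsky, lobachevsky, ← integral_interval_sub_left
    (intervalIntegrable_log_abs_two_mul_sin 0 b) (intervalIntegrable_log_abs_two_mul_sin 0 a)]
  ring

theorem lobachevsky_pi_sub (θ : ℝ) :
    lobachevsky (π - θ) = lobachevsky π - lobachevsky θ := by
  have h : (∫ t in (0:ℝ)..θ, log |2 * sin (π - t)|)
      = ∫ t in (π - θ)..π, log |2 * sin t| := by
    simpa using integral_comp_sub_left (fun t ↦ log |2 * sin t|) π (a := 0) (b := θ)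
  simp only [sin_pi_sub] at h
  rw [eq_sub_iff_add_eq, add_comm, ← eq_sub_iff_add_eq, lobachevsky_sub_lobachevsky, ← h,
    lobachevsky]

theorem two_mul_sin_three_mul (x : ℝ) :
    2 * sin (3 * x) = 2 * sin x * (2 * sin (x + π / 3)) * (2 * sin (x + 2 * π / 3)) := by
  have h₁ : sin (x + π / 3) = sin x / 2 + √3 / 2 * cos x := by
    rw [sin_add, cos_pi_div_three, sin_pi_div_three]; ring
  have h₂ : sin (x + 2 * π / 3) = √3 / 2 * cos x - sin x / 2 := by
    rw [show x + 2 * π / 3 = π - (π / 3 - x) by ring, sin_pi_sub, sin_sub,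
      cos_pi_div_three, sin_pi_div_three]; ring
  rw [sin_three_mul, h₁, h₂]
  linear_combination (-6 * sin x) * sin_sq_add_cos_sq x
    + (-2 * sin x * cos x ^ 2) * sq_sqrt (show (0:ℝ) ≤ 3 by norm_num)

theorem ae_sin_add_ne_zero (c : ℝ) : ∀ᵐ x ∂volume, sin (x + c) ≠ 0 := by
  rw [ae_iff]
  refine measure_mono_null (fun x hx ↦ ?_)
    ((Set.countable_range fun n : ℤ ↦ n * π - c).measure_zero _)
  obtain ⟨n, hn⟩ := sin_eq_zero_iff.mp (not_not.mp hx)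
  exact ⟨n, by linarith⟩

-- Only almost everywhere: at a zero of `sin`, `log 0 = 0` breaks the identity.
theorem ae_log_abs_two_mul_sin_three_mul : ∀ᵐ x ∂volume,
    log |2 * sin (3 * x)|
      = log |2 * sin x| + log |2 * sin (x + π / 3)| + log |2 * sin (x + 2 * π / 3)| := by
  filter_upwards [ae_sin_add_ne_zero 0, ae_sin_add_ne_zero (π / 3),
    ae_sin_add_ne_zero (2 * π / 3)] with x h₀ h₁ h₂
  rw [add_zero] at h₀
  rw [two_mul_sin_three_mul, abs_mul, abs_mul, log_mul, log_mul] <;> positivity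

theorem integral_log_abs_two_mul_sin_add (θ c : ℝ) :
    ∫ t in (0:ℝ)..θ, log |2 * sin (t + c)| = lobachevsky c - lobachevsky (θ + c) := by
  rw [integral_comp_add_right (fun t ↦ log |2 * sin t|), zero_add, ← neg_sub,
    lobachevsky_sub_lobachevsky, neg_neg]

theorem lobachevsky_three_mul (θ : ℝ) :
    lobachevsky (3 * θ) = 3 * (lobachevsky θ + lobachevsky (θ + π / 3)
      + lobachevsky (θ + 2 * π / 3) - lobachevsky (π / 3) - lobachevsky (2 * π / 3)) := by
  have hi (c : ℝ) : IntervalIntegrable (fun t ↦ log |2 * sin (t + c)|) volume 0 θ := by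
    simpa using (intervalIntegrable_log_abs_two_mul_sin c (θ + c)).comp_add_right c
  have hscale : ∫ t in (0:ℝ)..θ, log |2 * sin (3 * t)| = -lobachevsky (3 * θ) / 3 := by
    rw [integral_comp_mul_left (fun t ↦ log |2 * sin t|) three_ne_zero, mul_zero, lobachevsky,
      smul_eq_mul]
    ring
  have hsplit : ∫ t in (0:ℝ)..θ, log |2 * sin (3 * t)|
      = (∫ t in (0:ℝ)..θ, log |2 * sin (t + 0)|)
        + (∫ t in (0:ℝ)..θ, log |2 * sin (t + π / 3)|)
        + ∫ t in (0:ℝ)..θ, log |2 * sin (t + 2 * π / 3)| := by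
    rw [← integral_add (hi 0) (hi _), ← integral_add ((hi 0).add (hi _)) (hi _)]
    refine integral_congr_ae ?_
    filter_upwards [ae_log_abs_two_mul_sin_three_mul] with x hx _
    simpa using hx
  rw [hscale, integral_log_abs_two_mul_sin_add, integral_log_abs_two_mul_sin_add,
    integral_log_abs_two_mul_sin_add, add_zero, lobachevsky_zero] at hsplit
  linarith

/-- Thurston's antiprism formula at `n = 3` gives the volume of the regular
ideal octahedron: `6(Λ(5π/12) + Λ(π/12)) = 8Λ(π/4)`. -/
theorem antiprism_three_eq_octahedron :
    6 * (lobachevsky (5 * π / 12) + lobachevsky (π / 12))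
      = 8 * lobachevsky (π / 4) := by
  have htriple := lobachevsky_three_mul (π / 12)
  have h₁ := lobachevsky_pi_sub (π / 4)
  have h₂ := lobachevsky_pi_sub (π / 3)
  rw [show 3 * (π / 12) = π / 4 by ring, show π / 12 + π / 3 = 5 * π / 12 by ring,
    show π / 12 + 2 * π / 3 = π - π / 4 by ring] at htriple
  rw [show π - π / 3 = 2 * π / 3 by ring] at h₂
  linarith
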